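/- A maximum-size cycle graph planarly polygon-embeddable in a convex polygon with n ≥ 4 vertices has exactly ⌊n/2⌋ nodes. -/

import Mathlib

open Set Function

/-- Points in the plane. -/
abbrev Pt : Type := ℝ × ℝ

/-- The closed straight-line segment between two points. -/
def seg (a b : Pt) : Set Pt := segment ℝ a b

/-- Two vertex indices of an `n`-gon are adjacent (consecutive in the cyclic order). -/
def adjV {n : ℕ} [NeZero n] (i j : Fin n) : Prop := j = i + 1 ∨ i = j + 1

/-- The `i`-th boundary edge of the polygon with vertices `p`. -/
def edgeSeg {n : ℕ} [NeZero n] (p : Fin n → Pt) (i : Fin n) : Set Pt := seg (p i) (p (i + 1))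

/-- Two segments are non-crossing: they meet at most in shared endpoints. -/
def NC (a b c d : Pt) : Prop := seg a b ∩ seg c d ⊆ ({a, b} ∩ {c, d} : Set Pt)

/-- A simple polygon: at least 3 distinct vertices, and boundary edges meet only at
shared endpoints. -/
def IsSimplePolygon {n : ℕ} [NeZero n] (p : Fin n → Pt) : Prop :=
  3 ≤ n ∧ Function.Injective p ∧
    ∀ i j : Fin n, i ≠ j →
      edgeSeg p i ∩ edgeSeg p j ⊆ ({p i, p (i + 1)} ∩ {p j, p (j + 1)} : Set Pt)

/-- A convex polygon: a simple polygon whose vertices are in convex position. -/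
def IsConvexPolygon {n : ℕ} [NeZero n] (p : Fin n → Pt) : Prop :=
  IsSimplePolygon p ∧ ConvexIndependent ℝ p

/-- `K` is the closed region bounded by the polygon `p`. -/
def IsRegionOf {n : ℕ} [NeZero n] (p : Fin n → Pt) (K : Set Pt) : Prop :=
  IsCompact K ∧ closure (interior K) = K ∧ frontier K = ⋃ i, edgeSeg p i

/-- Vertex `a` and vertex `b` are visible from each other: the segment joining them does not
cross the polygon boundary (it meets each boundary edge only in shared endpoints). -/
def Visible {n : ℕ} [NeZero n] (p : Fin n → Pt) (a b : Fin n) : Prop :=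
  ∀ i : Fin n, seg (p a) (p b) ∩ edgeSeg p i ⊆ ({p a, p b} ∩ {p i, p (i + 1)} : Set Pt)

/-- Cross product of `b - a` and `c - a`. -/
def cross2 (a b c : Pt) : ℝ := (b.1 - a.1) * (c.2 - a.2) - (b.2 - a.2) * (c.1 - a.1)

/-- The vertices are listed counterclockwise (positive signed area). -/
def IsCCW {n : ℕ} [NeZero n] (p : Fin n → Pt) : Prop :=
  0 < ∑ i : Fin n, ((p i).1 * (p (i + 1)).2 - (p (i + 1)).1 * (p i).2)

/-- Vertex `i` of a counterclockwise polygon is reflex (interior angle greater than `π`). -/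
def IsReflex {n : ℕ} [NeZero n] (p : Fin n → Pt) (i : Fin n) : Prop :=
  cross2 (p (i - 1)) (p i) (p (i + 1)) < 0

/-- A pseudo-convex polygon: a simple (counterclockwise) polygon with no two consecutive
reflex vertices. -/
def IsPseudoConvex {n : ℕ} [NeZero n] (p : Fin n → Pt) : Prop :=
  IsSimplePolygon p ∧ IsCCW p ∧ ∀ i : Fin n, ¬ (IsReflex p i ∧ IsReflex p (i + 1))

/-- The set of vertices visible from `i`, together with `i` and its two boundary neighbours. -/
def visSet {n : ℕ} [NeZero n] (p : Fin n → Pt) (i : Fin n) : Set (Fin n) :=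
  {j | Visible p i j ∨ j = i - 1 ∨ j = i ∨ j = i + 1}

/-- Vertex `i` is isolated: it sees fewer than five vertices (counting itself and its two
neighbours), or exactly five and the two visible non-neighbours are adjacent to each other. -/
def IsIsolated {n : ℕ} [NeZero n] (p : Fin n → Pt) (i : Fin n) : Prop :=
  (visSet p i).ncard < 5 ∨
  ((visSet p i).ncard = 5 ∧
    ∀ u ∈ visSet p i, ∀ w ∈ visSet p i,
      u ∉ ({i - 1, i, i + 1} : Set (Fin n)) → w ∉ ({i - 1, i, i + 1} : Set (Fin n)) →
      u ≠ w → adjV u w)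

/-- A straight-line planar polygon embedding of the cycle graph on `m` nodes into the polygon
`p` with bounded region `K`: nodes map injectively to polygon vertices, every cycle edge is a
diagonal of the polygon (endpoints non-adjacent, hence not a polygon edge) lying inside `K`,
distinct cycle edges meet at most in shared endpoints, and cycle edges meet boundary edges at
most in shared endpoints. -/
def IsCycleEmbedding {n m : ℕ} [NeZero n] [NeZero m] (p : Fin n → Pt) (K : Set Pt)
    (f : Fin m → Fin n) : Prop :=
  Function.Injective f ∧
  (∀ k : Fin m, ¬ adjV (f k) (f (k + 1))) ∧
  (∀ k : Fin m, seg (p (f k)) (p (f (k + 1))) ⊆ K) ∧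
  (∀ k l : Fin m, ({p (f k), p (f (k + 1))} : Set Pt) ≠ ({p (f l), p (f (l + 1))} : Set Pt) →
    NC (p (f k)) (p (f (k + 1))) (p (f l)) (p (f (l + 1)))) ∧
  (∀ k : Fin m, ∀ i : Fin n,
    seg (p (f k)) (p (f (k + 1))) ∩ edgeSeg p i ⊆
      ({p (f k), p (f (k + 1))} ∩ {p i, p (i + 1)} : Set Pt))

/-!
The vertices of a convex polygon are in convex position, so sorting them by angle around the
lexicographically smallest one gives a polygon in which every cyclically ordered triple of
vertices turns counterclockwise. Simplicity forces the boundary to follow this angular order (up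
to rotation and reversal), so the given polygon also turns the same way at every cyclically
ordered triple. Consequently two chords cross exactly when their endpoints interleave in the
cyclic order.

Upper bound: in a noncrossing cycle each edge cuts off an arc containing no cycle vertex, so the
two cycle neighbours of a cycle vertex `v` enclose all other cycle vertices, and the polygon
vertex `v + 1` is a cycle vertex only if it is a cycle neighbour of `v`, i.e. a polygon edge is
used. Hence `v ↦ v + 1` maps the `m` cycle vertices into the `n - m` others and `2 m ≤ n`.
Lower bound: the cycle on the even-indexed vertices has chords whose arcs contain no other
cycle vertex, so they cross neither each other nor the boundary.
-/

lemma Nat.exists_mem_Ico_and_not_succ {P : ℕ → Prop} {a b : ℕ} (hab : a ≤ b) (ha : P a)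
    (hb : ¬ P b) : ∃ t ∈ Set.Ico a b, P t ∧ ¬ P (t + 1) := by
  induction b, hab using Nat.le_induction with
  | base => exact absurd ha hb
  | succ b hab ih =>
    by_cases hPb : P b
    · exact ⟨b, ⟨hab, b.lt_succ_self⟩, hPb, hb⟩
    · obtain ⟨t, ⟨h₁, h₂⟩, ht⟩ := ih hPb
      exact ⟨t, ⟨h₁, by omega⟩, ht⟩

lemma IsStrictTotalOrder.exists_equiv_fin {α : Type*} [Fintype α] (r : α → α → Prop)
    [IsStrictTotalOrder α r] {k : ℕ} (hk : Fintype.card α = k) :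
    ∃ e : Fin k ≃ α, ∀ s t, s < t → r (e s) (e t) := by
  classical
  let : LinearOrder α := linearOrderOfSTO r
  exact ⟨(Fintype.orderIsoFinOfCardEq α hk).toEquiv, fun s t h =>
    (Fintype.orderIsoFinOfCardEq α hk).strictMono h⟩

lemma seg_comm (a b : Pt) : seg a b = seg b a := segment_symm ℝ a b

lemma cross2_rotate (a b c : Pt) : cross2 a b c = cross2 b c a := by
  simp only [cross2]; ring

lemma cross2_swap (a b c : Pt) : cross2 a c b = -cross2 a b c := by
  simp only [cross2]; ring

lemma cross2_reverse (a b c : Pt) : cross2 c b a = -cross2 a b c := by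
  simp only [cross2]; ring

@[simp] lemma cross2_self_left (a c : Pt) : cross2 a a c = 0 := by
  simp [cross2]

@[simp] lemma cross2_self_right (a b : Pt) : cross2 a b b = 0 := by
  simp only [cross2]; ring

lemma mem_seg_iff {x a b : Pt} :
    x ∈ seg a b ↔ ∃ t : ℝ, 0 ≤ t ∧ t ≤ 1 ∧ x = (1 - t) • a + t • b := by
  simp only [seg, segment_eq_image, Set.mem_image, Set.mem_Icc]
  exact ⟨fun ⟨t, ⟨h0, h1⟩, hx⟩ => ⟨t, h0, h1, hx.symm⟩,
    fun ⟨t, h0, h1, hx⟩ => ⟨t, ⟨h0, h1⟩, hx.symm⟩⟩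

lemma convexComb_mem_seg (a b : Pt) {t : ℝ} (h0 : 0 ≤ t) (h1 : t ≤ 1) :
    (1 - t) • a + t • b ∈ seg a b :=
  mem_seg_iff.mpr ⟨t, h0, h1, rfl⟩

lemma cross2_convexComb (a b c d : Pt) (t : ℝ) :
    cross2 a b ((1 - t) • c + t • d) = (1 - t) * cross2 a b c + t * cross2 a b d := by
  simp only [cross2, Prod.fst_add, Prod.snd_add, Prod.smul_fst, Prod.smul_snd, smul_eq_mul]
  ring

lemma cross2_eq_zero_of_mem_seg {x a b : Pt} (h : x ∈ seg a b) : cross2 a b x = 0 := by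
  obtain ⟨t, -, -, rfl⟩ := mem_seg_iff.mp h
  rw [cross2_convexComb, cross2_swap, cross2_self_left, cross2_self_right]
  ring

lemma exists_eq_convexComb_of_cross2_eq_zero {a b x : Pt} (h : cross2 a b x = 0) (hab : a ≠ b) :
    ∃ t : ℝ, x = (1 - t) • a + t • b := by
  simp only [cross2] at h
  have hba : b.1 - a.1 ≠ 0 ∨ b.2 - a.2 ≠ 0 := by
    by_contra! hc
    exact hab (Prod.ext (by linarith [hc.1]) (by linarith [hc.2]))
  rcases hba with hba | hba
  · refine ⟨(x.1 - a.1) / (b.1 - a.1), Prod.ext ?_ ?_⟩ <;>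
      simp only [Prod.fst_add, Prod.snd_add, Prod.smul_fst, Prod.smul_snd, smul_eq_mul] <;>
      field_simp
    · ring
    · linear_combination h
  · refine ⟨(x.2 - a.2) / (b.2 - a.2), Prod.ext ?_ ?_⟩ <;>
      simp only [Prod.fst_add, Prod.snd_add, Prod.smul_fst, Prod.smul_snd, smul_eq_mul] <;>
      field_simp
    · linear_combination -h
    · ring

lemma seg_inter_seg_eq_empty_of_cross2_mul_pos {a b c d : Pt}
    (h : 0 < cross2 a b c * cross2 a b d) : seg a b ∩ seg c d = ∅ := by
  refine Set.eq_empty_of_forall_notMem fun x ⟨hab, hcd⟩ => ?_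
  obtain ⟨t, h0, h1, rfl⟩ := mem_seg_iff.mp hcd
  set C := cross2 a b c
  set D := cross2 a b d
  have hx : (1 - t) * C + t * D = 0 := by
    rw [← cross2_convexComb]; exact cross2_eq_zero_of_mem_seg hab
  have key : (1 - t) * (C * C) + C * D + t * (D * D) = 0 := by linear_combination (C + D) * hx
  nlinarith [mul_nonneg (sub_nonneg.mpr h1) (mul_self_nonneg C), mul_nonneg h0 (mul_self_nonneg D)]

lemma seg_inter_seg_nonempty_of_cross2_mul_neg {a b c d : Pt}
    (h₁ : cross2 a b c * cross2 a b d < 0) (h₂ : cross2 c d a * cross2 c d b < 0) :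
    (seg a b ∩ seg c d).Nonempty := by
  set A := cross2 c d a
  set B := cross2 c d b
  set u := A / (A - B)
  have hu : 0 ≤ u ∧ u ≤ 1 := by
    rcases mul_neg_iff.mp h₂ with ⟨hA, hB⟩ | ⟨hA, hB⟩
    · exact ⟨div_nonneg hA.le (by linarith), (div_le_one (by linarith)).mpr (by linarith)⟩
    · exact ⟨div_nonneg_of_nonpos hA.le (by linarith),
        (div_le_one_of_neg (by linarith)).mpr (by linarith)⟩
  have hAB : A - B ≠ 0 := by
    rcases mul_neg_iff.mp h₂ with ⟨hA, hB⟩ | ⟨hA, hB⟩ <;> intro h0 <;> linarith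
  set x := (1 - u) • a + u • b
  have hxab : x ∈ seg a b := convexComb_mem_seg a b hu.1 hu.2
  have hcdx : cross2 c d x = 0 := by
    simp only [x, cross2_convexComb, u]
    field_simp
    ring
  have hcd : c ≠ d := by
    rintro rfl
    simp [A] at h₂
  obtain ⟨t, hxt⟩ := exists_eq_convexComb_of_cross2_eq_zero hcdx hcd
  have habx := cross2_eq_zero_of_mem_seg hxab
  rw [hxt, cross2_convexComb] at habx
  refine ⟨x, hxab, hxt ▸ convexComb_mem_seg c d ?_ ?_⟩ <;>
    rcases mul_neg_iff.mp h₁ with ⟨hC, hD⟩ | ⟨hC, hD⟩ <;> nlinarith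

lemma mul_pos_of_sign_mul_pos {ε x y : ℝ} (hε : ε = 1 ∨ ε = -1) (hx : 0 < ε * x)
    (hy : 0 < ε * y) : 0 < x * y := by
  have : x * y = (ε * x) * (ε * y) := by rcases hε with rfl | rfl <;> ring
  rw [this]
  positivity

lemma seg_inter_seg_subset_of_cross2_ne_zero {a b c : Pt} (h : cross2 a b c ≠ 0) :
    seg a b ∩ seg a c ⊆ {a} := by
  rintro x ⟨hb, hc⟩
  obtain ⟨s, -, -, rfl⟩ := mem_seg_iff.mp hb
  obtain ⟨t, -, -, hst⟩ := mem_seg_iff.mp hc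
  have e1 := congrArg Prod.fst hst
  have e2 := congrArg Prod.snd hst
  simp only [Prod.fst_add, Prod.snd_add, Prod.smul_fst, Prod.smul_snd, smul_eq_mul] at e1 e2
  have hs : s * cross2 a b c = 0 := by
    simp only [cross2]
    linear_combination (c.2 - a.2) * e1 - (c.1 - a.1) * e2
  rw [(mul_eq_zero.mp hs).resolve_right h]
  simp

lemma cross2_ne_zero_of_convexIndependent {ι : Type*} {p : ι → Pt}
    (hp : ConvexIndependent ℝ p) {a b c : ι} (hab : a ≠ b) (hac : a ≠ c) (hbc : b ≠ c) :
    cross2 (p a) (p b) (p c) ≠ 0 := by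
  intro h0
  obtain ⟨t, ht⟩ := exists_eq_convexComb_of_cross2_eq_zero h0 (hp.injective.ne hab)
  have hcol : Collinear ℝ {p a, p b, p c} := by
    rw [collinear_iff_of_mem (Set.mem_insert _ _)]
    refine ⟨p b - p a, ?_⟩
    simp only [Set.mem_insert_iff, Set.mem_singleton_iff, vadd_eq_add]
    rintro x (rfl | rfl | rfl)
    · exact ⟨0, by simp⟩
    · exact ⟨1, by simp⟩
    · exact ⟨t, by rw [ht]; module⟩
  have hmem : ∀ x y z : ι, Wbtw ℝ (p x) (p y) (p z) → y = x ∨ y = z := fun x y z hw => by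
    have : p y ∈ convexHull ℝ (p '' {x, z}) := by
      rw [Set.image_pair, convexHull_pair]; exact mem_segment_iff_wbtw.mpr hw
    simpa using hp {x, z} y this
  rcases hcol.wbtw_or_wbtw_or_wbtw with hw | hw | hw
  · rcases hmem _ _ _ hw with h | h
    exacts [hab h.symm, hbc h]
  · rcases hmem _ _ _ hw with h | h
    exacts [hbc h.symm, hac h.symm]
  · rcases hmem _ _ _ hw with h | h
    exacts [hac h, hab h]

lemma mem_convexHull_of_cross2_pos {q u v w : Pt} (hquw : 0 < cross2 q u w)
    (hvuw : 0 < cross2 v u w) (hqvw : 0 < cross2 q v w) (hquv : 0 < cross2 q u v) :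
    v ∈ convexHull ℝ ({q, u, w} : Set Pt) := by
  set c₁ := cross2 v u w
  set c₂ := cross2 q v w
  set c₃ := cross2 q u v
  set K := cross2 q u w
  -- barycentric coordinates: `K • v = c₁ • q + c₂ • u + c₃ • w`, `c₁ + c₂ + c₃ = K`
  have hsum : c₁ + c₂ + c₃ = K := by simp only [c₁, c₂, c₃, K, cross2]; ring
  have hbary₁ : K * v.1 = c₁ * q.1 + c₂ * u.1 + c₃ * w.1 := by
    simp only [c₁, c₂, c₃, K, cross2]; ring
  have hbary₂ : K * v.2 = c₁ * q.2 + c₂ * u.2 + c₃ * w.2 := by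
    simp only [c₁, c₂, c₃, K, cross2]; ring
  have hconv := convex_convexHull ℝ ({q, u, w} : Set Pt)
  set z : Pt := (1 - c₃ / (c₂ + c₃)) • u + (c₃ / (c₂ + c₃)) • w
  have hz : z ∈ convexHull ℝ ({q, u, w} : Set Pt) :=
    hconv.segment_subset (subset_convexHull ℝ _ (by simp)) (subset_convexHull ℝ _ (by simp))
      (convexComb_mem_seg u w (by positivity) ((div_le_one (by linarith)).mpr (by linarith)))
  have hv : v = (1 - (c₂ + c₃) / K) • q + ((c₂ + c₃) / K) • z := by
    apply Prod.ext <;>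
      simp only [z, Prod.fst_add, Prod.snd_add, Prod.smul_fst, Prod.smul_snd, smul_eq_mul] <;>
      field_simp
    · linear_combination hbary₁ + q.1 * hsum
    · linear_combination hbary₂ + q.2 * hsum
  rw [hv]
  exact hconv.segment_subset (subset_convexHull ℝ _ (by simp)) hz
    (convexComb_mem_seg q z (by positivity) ((div_le_one hquw).mpr (by linarith)))

/-- Angles seen from a lexicographically minimal point `q` lie in a half-plane, so "`y` is
counterclockwise of `x` as seen from `q`" is transitive. -/
lemma cross2_pos_trans {q x y z : Pt} (hx : toLex q < toLex x) (hy : toLex q < toLex y)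
    (hz : toLex q < toLex z) (hxy : 0 < cross2 q x y) (hyz : 0 < cross2 q y z) :
    0 < cross2 q x z := by
  simp only [Prod.Lex.toLex_lt_toLex] at hx hy hz
  simp only [cross2] at hxy hyz ⊢
  rcases hy with hy | ⟨hy, hy'⟩
  · have hx' : 0 < x.1 - q.1 := by
      rcases hx with hx | ⟨hx, hx'⟩
      · linarith
      · rw [← hx] at hxy; nlinarith
    have hz' : 0 ≤ z.1 - q.1 := by rcases hz with hz | ⟨hz, -⟩ <;> linarith
    nlinarith [mul_pos hx' hyz, mul_nonneg hz' hxy.le]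
  · rw [← hy] at hxy hyz
    have hz' : 0 ≤ z.1 - q.1 := by rcases hz with hz | ⟨hz, -⟩ <;> linarith
    nlinarith [mul_nonneg (sub_nonneg.mpr hy'.le) hz']

/-- Otherwise `b` would lie in the triangle `o a c`. -/
lemma ConvexIndependent.cross2_pos_of_fan {ι : Type*} {p : ι → Pt}
    (hp : ConvexIndependent ℝ p) {o a b c : ι} (hab : 0 < cross2 (p o) (p a) (p b))
    (hbc : 0 < cross2 (p o) (p b) (p c)) (hac : 0 < cross2 (p o) (p a) (p c)) :
    0 < cross2 (p a) (p b) (p c) := by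
  have hab' : a ≠ b := by rintro rfl; simp at hab
  have hbc' : b ≠ c := by rintro rfl; simp at hbc
  have hac' : a ≠ c := by rintro rfl; simp at hac
  have hob : o ≠ b := by rintro rfl; rw [cross2_rotate] at hab; simp at hab
  refine (lt_or_gt_of_ne (cross2_ne_zero_of_convexIndependent hp hab' hac' hbc')).resolve_left
    fun hneg => ?_
  have hmem := mem_convexHull_of_cross2_pos hac
    (by rw [cross2_rotate, cross2_swap]; linarith) hbc hab
  rw [← Set.image_singleton, ← Set.image_insert_eq, ← Set.image_insert_eq] at hmem
  have := hp _ _ hmem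
  simp only [Set.mem_insert_iff, Set.mem_singleton_iff] at this
  rcases this with h | h | h
  exacts [hob h.symm, hab' h.symm, hbc' h]

open scoped Fin.NatCast Fin.CommRing

section CyclicOrder

variable {n : ℕ}

def cycDist (a b : Fin n) : ℕ := (b - a).val

/-- `b` lies strictly inside the arc of `Fin n` from `a` to `c` in the `+1` direction. -/
def CycBtw (a b c : Fin n) : Prop := 0 < cycDist a b ∧ cycDist a b < cycDist a c

lemma cycDist_eq (a b : Fin n) :
    cycDist a b = if a.val ≤ b.val then b.val - a.val else b.val + n - a.val := by
  have ha := a.isLt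
  have hb := b.isLt
  simp only [cycDist, Fin.sub_def]
  split_ifs with h
  · rw [show n - a.val + b.val = b.val - a.val + n by omega, Nat.add_mod_right,
      Nat.mod_eq_of_lt (by omega)]
  · rw [Nat.mod_eq_of_lt (by omega)]
    omega

lemma cycDist_lt (a b : Fin n) : cycDist a b < n := (b - a).isLt

lemma CycBtw.ne₂₃ {a b c : Fin n} (h : CycBtw a b c) : b ≠ c := by
  rintro rfl
  exact h.2.ne rfl

lemma cycDist_add_cycDist {a b : Fin n} (h : a ≠ b) : cycDist a b + cycDist b a = n := by
  rw [cycDist_eq, cycDist_eq]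
  have := a.isLt
  have := b.isLt
  have := Fin.val_ne_of_ne h
  split_ifs <;> omega

lemma CycBtw.lt_lt_cases {a b c : Fin n} (h : CycBtw a b c) :
    (a < b ∧ b < c) ∨ (b < c ∧ c < a) ∨ (c < a ∧ a < b) := by
  unfold CycBtw at h
  rw [cycDist_eq, cycDist_eq] at h
  have := a.isLt
  have := b.isLt
  have := c.isLt
  simp only [Fin.lt_def]
  split_ifs at h <;> omega

variable [NeZero n]

@[simp] lemma cycDist_self (a : Fin n) : cycDist a a = 0 := by
  simp [cycDist]

@[simp] lemma cycDist_eq_zero {a b : Fin n} : cycDist a b = 0 ↔ a = b := by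
  simp [cycDist, Fin.ext_iff, sub_eq_zero, eq_comm]

lemma cycDist_pos {a b : Fin n} (h : a ≠ b) : 0 < cycDist a b :=
  Nat.pos_of_ne_zero (cycDist_eq_zero.not.mpr h)

lemma cycDist_injective (a : Fin n) : Function.Injective (cycDist a) := fun b c h => by
  simpa [cycDist, Fin.val_inj] using h

lemma cycDist_trans (a b c : Fin n) :
    cycDist a c = cycDist a b + cycDist b c ∨ cycDist a c + n = cycDist a b + cycDist b c := by
  have h : cycDist a c = (cycDist a b + cycDist b c) % n := by
    rw [cycDist, show c - a = (b - a) + (c - b) by ring, Fin.val_add]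
    rfl
  have := cycDist_lt a b
  have := cycDist_lt b c
  rcases lt_or_ge (cycDist a b + cycDist b c) n with hl | hl
  · exact .inl (h.trans (Nat.mod_eq_of_lt hl))
  · rw [Nat.mod_eq_sub_mod hl, Nat.mod_eq_of_lt (by omega)] at h
    omega

@[simp] lemma cycDist_add (a c : Fin n) : cycDist a (a + c) = c.val := by
  simp [cycDist]

@[simp] lemma add_cycDist (a b : Fin n) : a + (cycDist a b : Fin n) = b := by
  rw [cycDist, Fin.cast_val_eq_self]
  ring

lemma cycDist_add_one (a : Fin n) (hn : 2 ≤ n) : cycDist a (a + 1) = 1 := by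
  rw [cycDist_add, Fin.val_one', Nat.mod_eq_of_lt hn]

lemma self_ne_add_one (hn : 2 ≤ n) (a : Fin n) : a ≠ a + 1 := fun h => by
  have := cycDist_add_one a hn
  rw [← h, cycDist_self] at this
  exact zero_ne_one this

lemma cycDist_add_left (v a b : Fin n) : cycDist (v + a) (v + b) = cycDist a b := by
  simp [cycDist]

lemma cycDist_sub_left (v a b : Fin n) : cycDist (v - a) (v - b) = cycDist b a := by
  simp [cycDist]

lemma CycBtw.ne₁₂ {a b c : Fin n} (h : CycBtw a b c) : a ≠ b := by
  rintro rfl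
  simp [CycBtw] at h

lemma CycBtw.ne₁₃ {a b c : Fin n} (h : CycBtw a b c) : a ≠ c := by
  rintro rfl
  simp [CycBtw] at h

lemma CycBtw.rotate {a b c : Fin n} (h : CycBtw a b c) : CycBtw b c a := by
  have e₁ := cycDist_add_cycDist h.ne₁₂
  have e₂ := cycDist_add_cycDist h.ne₁₃
  have := cycDist_trans a b c
  have := cycDist_lt a c
  have := cycDist_lt b c
  exact ⟨cycDist_pos h.ne₂₃, by unfold CycBtw at h; omega⟩

lemma cycBtw_or_cycBtw {a b x : Fin n} (hab : a ≠ b) (hxa : x ≠ a) (hxb : x ≠ b) :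
    CycBtw a x b ∨ CycBtw b x a := by
  have h₁ := cycDist_add_cycDist hab
  have h₂ := cycDist_add_cycDist hxa.symm
  have h₃ := cycDist_trans a b x
  have := cycDist_lt a x
  have := cycDist_lt b x
  have hne : cycDist a x ≠ cycDist a b := fun h => hxb (cycDist_injective a h)
  have := cycDist_pos hxa.symm
  have := cycDist_pos hxb.symm
  unfold CycBtw
  omega

lemma CycBtw.not_cycBtw {a b x : Fin n} (h : CycBtw a x b) : ¬ CycBtw b x a := fun h' => by
  have := cycDist_add_cycDist h.ne₁₃
  have := cycDist_trans a b x
  have := cycDist_lt b x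
  unfold CycBtw at h h'
  omega

lemma not_cycBtw_add_one (a x : Fin n) : ¬ CycBtw a x (a + 1) := fun h => by
  have : cycDist a (a + 1) ≤ 1 := by rw [cycDist_add, Fin.val_one']; exact Nat.mod_le 1 n
  unfold CycBtw at h
  omega

lemma two_le_cycDist {a b : Fin n} (hn : 2 ≤ n) (hba : b ≠ a) (hb : b ≠ a + 1) :
    2 ≤ cycDist a b := by
  have := cycDist_pos hba.symm
  have : cycDist a b ≠ 1 := fun h =>
    hb (cycDist_injective a (h.trans (cycDist_add_one a hn).symm))
  omega

lemma cycBtw_add_one {a c : Fin n} (hn : 2 ≤ n) (hca : c ≠ a) (hc : c ≠ a + 1) :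
    CycBtw a (a + 1) c := by
  rw [CycBtw, cycDist_add_one a hn]
  exact ⟨Nat.one_pos, two_le_cycDist hn hca hc⟩

lemma eq_add_one_of_forall_not_cycBtw {a b : Fin n} (hn : 2 ≤ n) (hab : a ≠ b)
    (h : ∀ x, ¬ CycBtw a x b) : b = a + 1 := by
  by_contra hb
  exact h _ (cycBtw_add_one hn hab.symm hb)

lemma cycBtw_add_left_iff (v : Fin n) {a b c : Fin n} :
    CycBtw (v + a) (v + b) (v + c) ↔ CycBtw a b c := by
  simp only [CycBtw, cycDist_add_left]

lemma CycBtw.sub_left (v : Fin n) {a b c : Fin n} (h : CycBtw a b c) :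
    CycBtw (v - a) (v - c) (v - b) := by
  have := cycDist_add_cycDist h.ne₁₂
  have := cycDist_add_cycDist h.ne₁₃
  have := cycDist_lt a c
  unfold CycBtw at h ⊢
  rw [cycDist_sub_left, cycDist_sub_left]
  omega

lemma Fin.add_one_add_one_ne_self (hn : 3 ≤ n) (k : Fin n) : k + 1 + 1 ≠ k := by
  intro h
  have : ((2 : ℕ) : Fin n) = 0 := by
    rw [add_assoc, add_eq_left] at h
    rw [← h]; norm_num
  rw [Fin.natCast_eq_zero] at this
  exact absurd (Nat.le_of_dvd two_pos this) (by omega)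

/-- Reversing direction would send `k` and `k + 2` to the same value. -/
lemma Fin.eq_add_or_eq_sub_of_adjacent (hn : 3 ≤ n) {σ : Fin n → Fin n}
    (hσ : Function.Injective σ) (h : ∀ k, σ (k + 1) = σ k + 1 ∨ σ k = σ (k + 1) + 1) :
    (∀ k, σ k = σ 0 + k) ∨ (∀ k, σ k = σ 0 - k) := by
  have hstep : ∀ k, σ (k + 1) - σ k = 1 ∨ σ (k + 1) - σ k = -1 := fun k => by
    rcases h k with h | h
    · exact .inl (by rw [h]; ring)
    · exact .inr (by rw [h]; ring)
  have hconst : ∀ k, σ (k + 1 + 1) - σ (k + 1) = σ (k + 1) - σ k := fun k => by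
    by_contra hne
    refine Fin.add_one_add_one_ne_self hn k (hσ ?_)
    rcases hstep k with h₁ | h₁ <;> rcases hstep (k + 1) with h₂ | h₂ <;>
      rw [h₁, h₂] at hne
    · exact absurd rfl hne
    · linear_combination h₂ + h₁
    · linear_combination h₂ + h₁
    · exact absurd rfl hne
  have hdiff : ∀ t : ℕ, σ ((t : Fin n) + 1) - σ t = σ 1 - σ 0 := fun t => by
    induction t with
    | zero => simp
    | succ t ih => push_cast; rw [hconst, ih]
  have hval : ∀ t : ℕ, σ t = σ 0 + t * (σ 1 - σ 0) := fun t => by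
    induction t with
    | zero => simp
    | succ t ih => push_cast; linear_combination hdiff t + ih
  rcases hstep 0 with h₀ | h₀ <;> rw [zero_add] at h₀
  · exact .inl fun k => by simpa [h₀] using hval k
  · exact .inr fun k => by simpa [h₀, sub_eq_add_neg] using hval k

lemma Finset.two_mul_card_le_of_add_one_notMem {S : Finset (Fin n)}
    (h : ∀ i ∈ S, i + 1 ∉ S) : 2 * S.card ≤ n := by
  have hdisj : Disjoint S (S.image (· + 1)) := Finset.disjoint_left.mpr fun i hi hi' => by
    obtain ⟨j, hj, rfl⟩ := Finset.mem_image.mp hi'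
    exact h j hj hi
  have := Finset.card_le_univ (S ∪ S.image (· + 1))
  rw [Finset.card_union_of_disjoint hdisj, Finset.card_image_of_injective _ (add_left_injective 1),
    Fintype.card_fin] at this
  omega

end CyclicOrder

section Chords

variable {n : ℕ}

def ChordsCross (a b c d : Fin n) : Prop :=
  (CycBtw a c b ∧ CycBtw b d a) ∨ (CycBtw a d b ∧ CycBtw b c a)

def IsNoncrossing {m : ℕ} [NeZero m] (g : Fin m → Fin n) : Prop :=
  ∀ k l, ¬ ChordsCross (g k) (g (k + 1)) (g l) (g (l + 1))

variable [NeZero n]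

lemma CycBtw.interleave {a b c d : Fin n} (h₁ : CycBtw a c b) (h₂ : CycBtw b d a) :
    CycBtw c b d ∧ CycBtw d a c := by
  have := cycDist_add_cycDist h₁.ne₁₃
  have := cycDist_add_cycDist h₂.ne₂₃
  have := cycDist_trans a b d
  have := cycDist_trans a c d
  have := cycDist_trans a c b
  have := cycDist_trans d a c
  have := cycDist_lt c b
  unfold CycBtw at *
  omega

lemma ChordsCross.symm {a b c d : Fin n} (h : ChordsCross a b c d) : ChordsCross c d a b := by
  rcases h with ⟨h₁, h₂⟩ | ⟨h₁, h₂⟩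
  · exact .inr (h₁.interleave h₂)
  · exact .inl (h₁.interleave h₂).symm

lemma ChordsCross.ne {a b c d : Fin n} (h : ChordsCross a b c d) :
    a ≠ c ∧ a ≠ d ∧ b ≠ c ∧ b ≠ d := by
  rcases h with ⟨h₁, h₂⟩ | ⟨h₁, h₂⟩
  · exact ⟨h₁.ne₁₂, h₂.ne₂₃.symm, h₁.ne₂₃.symm, h₂.ne₁₂⟩
  · exact ⟨h₂.ne₂₃.symm, h₁.ne₁₂, h₂.ne₁₂, h₁.ne₂₃.symm⟩

/-- If both arcs cut out by the edge `g k, g (k + 1)` contained vertices of `g`, then the path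
`g (k + 2), …, g (k - 1)` would have to jump from one arc to the other along a crossing edge. -/
lemma IsNoncrossing.side_empty {m : ℕ} [NeZero m] {g : Fin m → Fin n} (hnc : IsNoncrossing g)
    (hg : Function.Injective g) (k : Fin m) :
    (∀ j, ¬ CycBtw (g k) (g j) (g (k + 1))) ∨ (∀ j, ¬ CycBtw (g (k + 1)) (g j) (g k)) := by
  by_contra! h
  obtain ⟨⟨j₁, hj₁⟩, j₂, hj₂⟩ := h
  have hm : 2 ≤ m := by
    by_contra! hm
    have : Subsingleton (Fin m) := Fin.subsingleton_iff_le_one.mpr (by omega)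
    exact hj₁.ne₁₃ (congrArg g (Subsingleton.elim _ _))
  have hk : g k ≠ g (k + 1) := hj₁.ne₁₃
  have hcast : ∀ t : ℕ, k + ((t + 1 : ℕ) : Fin m) = k + (t : Fin m) + 1 := fun t => by
    push_cast; ring
  have hside : ∀ t : ℕ, 2 ≤ t → t < m →
      CycBtw (g k) (g (k + t)) (g (k + 1)) ∨ CycBtw (g (k + 1)) (g (k + t)) (g k) := by
    intro t h2 htm
    have hdist : cycDist k (k + (t : Fin m)) = t := by rw [cycDist_add, Fin.val_cast_of_lt htm]
    refine cycBtw_or_cycBtw hk (hg.ne fun h => ?_) (hg.ne fun h => ?_) <;> rw [h] at hdist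
    · rw [cycDist_self] at hdist; omega
    · rw [cycDist_add_one k hm] at hdist; omega
  have h₁ := two_le_cycDist hm (hg.ne_iff.mp hj₁.ne₁₂.symm) (hg.ne_iff.mp hj₁.ne₂₃)
  have h₂ := two_le_cycDist hm (hg.ne_iff.mp hj₂.ne₂₃) (hg.ne_iff.mp hj₂.ne₁₂.symm)
  have h₁' := cycDist_lt k j₁
  have h₂' := cycDist_lt k j₂
  rw [← add_cycDist k j₁] at hj₁
  rw [← add_cycDist k j₂] at hj₂
  rcases lt_trichotomy (cycDist k j₁) (cycDist k j₂) with hlt | heq | hgt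
  · obtain ⟨t, ⟨ht₁, ht₂⟩, hP, hP'⟩ :=
      Nat.exists_mem_Ico_and_not_succ (P := fun t => CycBtw (g k) (g (k + t)) (g (k + 1)))
        hlt.le hj₁ (fun h => h.not_cycBtw hj₂)
    have hQ := (hside (t + 1) (by omega) (by omega)).resolve_left hP'
    rw [hcast] at hQ
    exact hnc k (k + t) (.inl ⟨hP, hQ⟩)
  · rw [heq] at hj₁
    exact hj₁.not_cycBtw hj₂
  · obtain ⟨t, ⟨ht₁, ht₂⟩, hQ, hQ'⟩ :=
      Nat.exists_mem_Ico_and_not_succ (P := fun t => CycBtw (g (k + 1)) (g (k + t)) (g k))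
        hgt.le hj₂ (fun h => hj₁.not_cycBtw h)
    have hP := (hside (t + 1) (by omega) (by omega)).resolve_right hQ'
    rw [hcast] at hP
    exact hnc k (k + t) (.inr ⟨hP, hQ⟩)

end Chords

section Oriented

variable {n : ℕ}

def IsCycOriented (q : Fin n → Pt) (ε : ℝ) : Prop :=
  (ε = 1 ∨ ε = -1) ∧ ∀ a b c, CycBtw a b c → 0 < ε * cross2 (q a) (q b) (q c)

namespace IsCycOriented

variable {q : Fin n → Pt} {ε : ℝ}

lemma seg_inter_eq_empty (hq : IsCycOriented q ε) {a b c d : Fin n} (h₁ : CycBtw a c b)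
    (h₂ : CycBtw a d b) : seg (q a) (q b) ∩ seg (q c) (q d) = ∅ := by
  apply seg_inter_seg_eq_empty_of_cross2_mul_pos
  have := mul_pos_of_sign_mul_pos hq.1 (hq.2 _ _ _ h₁) (hq.2 _ _ _ h₂)
  rw [cross2_swap, cross2_swap (q a) (q b) (q d)] at this
  linarith

variable [NeZero n]

lemma cross2_ne_zero (hq : IsCycOriented q ε) {a b c : Fin n} (hab : a ≠ b) (hac : a ≠ c)
    (hbc : b ≠ c) : cross2 (q a) (q b) (q c) ≠ 0 := by
  intro h0
  rcases cycBtw_or_cycBtw hac hab.symm hbc with h | h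
  · simpa [h0] using hq.2 _ _ _ h
  · have := hq.2 _ _ _ h
    rw [cross2_reverse, h0] at this
    simp at this

lemma seg_inter_nonempty_of_cycBtw (hq : IsCycOriented q ε) {a b c d : Fin n}
    (h₁ : CycBtw a c b) (h₂ : CycBtw b d a) :
    (seg (q a) (q b) ∩ seg (q c) (q d)).Nonempty := by
  obtain ⟨h₃, h₄⟩ := h₁.interleave h₂
  apply seg_inter_seg_nonempty_of_cross2_mul_neg
  · have := mul_pos_of_sign_mul_pos hq.1 (hq.2 _ _ _ h₁) (hq.2 _ _ _ h₂.rotate.rotate)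
    rw [cross2_swap] at this
    linarith
  · have := mul_pos_of_sign_mul_pos hq.1 (hq.2 _ _ _ h₄.rotate) (hq.2 _ _ _ h₃)
    rw [cross2_swap (q c), cross2_rotate (q a)] at this
    linarith

lemma seg_inter_nonempty (hq : IsCycOriented q ε) {a b c d : Fin n} (h : ChordsCross a b c d) :
    (seg (q a) (q b) ∩ seg (q c) (q d)).Nonempty := by
  rcases h with ⟨h₁, h₂⟩ | ⟨h₁, h₂⟩
  · exact hq.seg_inter_nonempty_of_cycBtw h₁ h₂
  · rw [seg_comm (q c)]
    exact hq.seg_inter_nonempty_of_cycBtw h₁ h₂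

lemma not_chordsCross (hq : IsCycOriented q ε) (hinj : Function.Injective q) {a b c d : Fin n}
    (h : seg (q a) (q b) ∩ seg (q c) (q d) ⊆ {q a, q b} ∩ {q c, q d}) :
    ¬ ChordsCross a b c d := fun hcross => by
  obtain ⟨x, hx⟩ := hq.seg_inter_nonempty hcross
  obtain ⟨hac, had, hbc, hbd⟩ := hcross.ne
  obtain ⟨hab | hab, hcd | hcd⟩ := h hx <;> rw [hab] at hcd <;>
    simp only [Set.mem_singleton_iff, hinj.eq_iff] at hcd <;> tauto

lemma seg_inter_subset (hq : IsCycOriented q ε) {a b c d : Fin n} (hab : a ≠ b) (hcd : c ≠ d)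
    (hne : ({q a, q b} : Set Pt) ≠ {q c, q d}) (h : ¬ ChordsCross a b c d) :
    seg (q a) (q b) ∩ seg (q c) (q d) ⊆ {q a, q b} ∩ {q c, q d} := by
  rintro x ⟨hx₁, hx₂⟩
  have hshared {u v w : Fin n} (huv : u ≠ v) (huw : u ≠ w) (hvw : v ≠ w)
      (hv : x ∈ seg (q u) (q v)) (hw : x ∈ seg (q u) (q w)) : x = q u :=
    seg_inter_seg_subset_of_cross2_ne_zero (hq.cross2_ne_zero huv huw hvw) ⟨hv, hw⟩
  by_cases hac : a = c
  · subst hac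
    have hbd : b ≠ d := by rintro rfl; exact hne rfl
    simp [hshared hab hcd hbd hx₁ hx₂]
  by_cases had : a = d
  · subst had
    have hbc : b ≠ c := by rintro rfl; exact hne (Set.pair_comm _ _)
    rw [seg_comm] at hx₂
    simp [hshared hab hcd.symm hbc hx₁ hx₂]
  by_cases hbc : b = c
  · subst hbc
    rw [seg_comm] at hx₁
    simp [hshared hab.symm hcd had hx₁ hx₂]
  by_cases hbd : b = d
  · subst hbd
    rw [seg_comm] at hx₁ hx₂
    simp [hshared hab.symm hcd.symm hac hx₁ hx₂]
  exfalso
  rcases cycBtw_or_cycBtw hab (Ne.symm hac) (Ne.symm hbc) with hc | hc <;>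
    rcases cycBtw_or_cycBtw hab (Ne.symm had) (Ne.symm hbd) with hd | hd
  · exact (hq.seg_inter_eq_empty hc hd).subset ⟨hx₁, hx₂⟩
  · exact h (.inl ⟨hc, hd⟩)
  · exact h (.inr ⟨hd, hc⟩)
  · rw [seg_comm] at hx₁
    exact (hq.seg_inter_eq_empty hc hd).subset ⟨hx₁, hx₂⟩

end IsCycOriented

end Oriented

/-- Sorting the vertices by angle around the lexicographically smallest one. -/
lemma ConvexIndependent.exists_equiv_isCycOriented {n : ℕ} [NeZero n] {p : Fin n → Pt}
    (hp : ConvexIndependent ℝ p) : ∃ e : Fin n ≃ Fin n, IsCycOriented (p ∘ e) 1 := by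
  obtain ⟨o, -, hmin⟩ := Finset.exists_min_image Finset.univ (fun i => toLex (p i))
    Finset.univ_nonempty
  have hlex : ∀ j, j ≠ o → toLex (p o) < toLex (p j) := fun j hj =>
    (hmin j (Finset.mem_univ j)).lt_of_ne (by simpa using hp.injective.ne hj.symm)
  let r : Fin n → Fin n → Prop := fun a b =>
    b ≠ o ∧ (a = o ∨ 0 < cross2 (p o) (p a) (p b))
  have : IsStrictTotalOrder (Fin n) r :=
    { irrefl a := by simp [r]
      trans a b c := by
        rintro ⟨hbo, hab⟩ ⟨hco, hbc⟩
        refine ⟨hco, ?_⟩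
        by_cases hao : a = o
        · exact .inl hao
        · exact .inr (cross2_pos_trans (hlex a hao) (hlex b hbo) (hlex c hco)
            (hab.resolve_left hao) (hbc.resolve_left hbo))
      trichotomous a b hab hba := by
        by_contra hne
        by_cases hao : a = o
        · exact hab ⟨fun h => hne (hao.trans h.symm), .inl hao⟩
        by_cases hbo : b = o
        · exact hba ⟨hao, .inl hbo⟩
        rcases lt_or_gt_of_ne (cross2_ne_zero_of_convexIndependent hp (Ne.symm hao)
          (Ne.symm hbo) hne) with h | h
        · exact hba ⟨hao, .inr (by rw [cross2_swap]; linarith)⟩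
        · exact hab ⟨hbo, .inr h⟩ }
  obtain ⟨e, he⟩ := IsStrictTotalOrder.exists_equiv_fin r (Fintype.card_fin n)
  have hpos : ∀ s t u, s < t → t < u → 0 < cross2 (p (e s)) (p (e t)) (p (e u)) := by
    intro s t u hst htu
    obtain ⟨hto, hst'⟩ := he s t hst
    obtain ⟨huo, htu'⟩ := he t u htu
    have htu'' := htu'.resolve_left hto
    rcases hst' with hso | hst'
    · rwa [hso]
    · exact hp.cross2_pos_of_fan hst' htu''
        (((he s u (hst.trans htu)).2).resolve_left fun h => by simp [h] at hst')
  refine ⟨e, .inl rfl, fun a b c h => ?_⟩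
  simp only [Function.comp_apply, one_mul]
  rcases h.lt_lt_cases with ⟨h₁, h₂⟩ | ⟨h₁, h₂⟩ | ⟨h₁, h₂⟩
  · exact hpos a b c h₁ h₂
  · rw [cross2_rotate]; exact hpos b c a h₁ h₂
  · rw [← cross2_rotate]; exact hpos c a b h₁ h₂

lemma IsConvexPolygon.exists_isCycOriented {n : ℕ} [NeZero n] {p : Fin n → Pt}
    (hP : IsConvexPolygon p) : ∃ ε, IsCycOriented p ε := by
  obtain ⟨⟨hn, -, hsimple⟩, hconv⟩ := hP
  obtain ⟨e, he⟩ := hconv.exists_equiv_isCycOriented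
  have hq : Function.Injective (p ∘ e) := hconv.injective.comp e.injective
  have hpe : ∀ k, (p ∘ e) (e.symm k) = p k := fun k => by simp
  have hnc : IsNoncrossing e.symm := fun k l => by
    by_cases hkl : k = l
    · exact fun h => h.ne.1 (by rw [hkl])
    · apply he.not_chordsCross hq
      simpa only [hpe, edgeSeg] using hsimple k l hkl
  have hadj : ∀ k, e.symm (k + 1) = e.symm k + 1 ∨ e.symm k = e.symm (k + 1) + 1 := fun k => by
    have hne : e.symm k ≠ e.symm (k + 1) := e.symm.injective.ne (self_ne_add_one (by omega) k)
    have hsurj {a b : Fin n} (h : ∀ j, ¬ CycBtw a (e.symm j) b) (x : Fin n) :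
        ¬ CycBtw a x b := by
      simpa using h (e x)
    rcases hnc.side_empty e.symm.injective k with h | h
    · exact .inl (eq_add_one_of_forall_not_cycBtw (by omega) hne (hsurj h))
    · exact .inr (eq_add_one_of_forall_not_cycBtw (by omega) hne.symm (hsurj h))
  rcases Fin.eq_add_or_eq_sub_of_adjacent hn e.symm.injective hadj with h | h
  · refine ⟨1, .inl rfl, fun a b c habc => ?_⟩
    have := he.2 _ _ _ ((cycBtw_add_left_iff (e.symm 0)).mpr habc)
    rwa [← h, ← h, ← h, hpe, hpe, hpe] at this
  · refine ⟨-1, .inr rfl, fun a b c habc => ?_⟩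
    have := he.2 _ _ _ (habc.sub_left (e.symm 0))
    rw [← h, ← h, ← h, hpe, hpe, hpe, cross2_swap] at this
    linarith

section Bounds

variable {n : ℕ} [NeZero n] {p : Fin n → Pt} {ε : ℝ}

lemma IsCycOriented.two_mul_le_of_isCycleEmbedding (hp : IsCycOriented p ε)
    (hinj : Function.Injective p) {K : Set Pt} {m : ℕ} [NeZero m] (hm : 3 ≤ m)
    {f : Fin m → Fin n} (hf : IsCycleEmbedding p K f) : 2 * m ≤ n := by
  obtain ⟨hfinj, hnadj, -, hNC, -⟩ := hf
  have hnc : IsNoncrossing f := fun k l hcross => by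
    refine hp.not_chordsCross hinj (hNC k l fun hset => ?_) hcross
    have hmem : p (f l) ∈ ({p (f k), p (f (k + 1))} : Set Pt) := hset ▸ Set.mem_insert _ _
    obtain ⟨h₁, -, h₂, -⟩ := hcross.ne
    rcases hmem with h | h
    exacts [h₁ (hinj h).symm, h₂ (hinj h).symm]
  have hnext : ∀ k l, f l ≠ f k + 1 := fun k l hl => by
    have hne₁ : f (k + 1) ≠ f k := hfinj.ne (self_ne_add_one (by omega) k).symm
    have hne₂ : f (k - 1) ≠ f k := hfinj.ne fun h => self_ne_add_one (by omega) (k - 1) (by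
      rw [sub_add_cancel, h])
    have hne₃ : f (k + 1) ≠ f (k - 1) :=
      hfinj.ne fun h => Fin.add_one_add_one_ne_self hm (k - 1) (by rw [sub_add_cancel, h])
    have hright : ∀ j, ¬ CycBtw (f (k + 1)) (f j) (f k) := by
      refine (hnc.side_empty hfinj k).resolve_left fun h => h l ?_
      rw [hl]
      exact cycBtw_add_one (by omega) hne₁ fun h' => hnadj k (.inl h')
    have hleft : ∀ j, ¬ CycBtw (f (k - 1)) (f j) (f k) := by
      have := (hnc.side_empty hfinj (k - 1))
      rw [sub_add_cancel] at this
      refine this.resolve_right fun h => h l ?_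
      rw [hl]
      exact cycBtw_add_one (by omega) hne₂ fun h' => hnadj (k - 1) (.inr (by simpa using h'))
    rcases cycBtw_or_cycBtw hne₁ hne₃.symm hne₂ with h₁ | h₁
    · exact hright _ h₁
    rcases cycBtw_or_cycBtw hne₂ hne₃ hne₁ with h₂ | h₂
    · exact hleft _ h₂
    · exact lt_asymm h₁.2 h₂.2
  have := Finset.two_mul_card_le_of_add_one_notMem (S := Finset.univ.image f) (by
    simp only [Finset.mem_image, Finset.mem_univ, true_and]
    rintro _ ⟨k, rfl⟩ ⟨l, hl⟩
    exact hnext k l hl)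
  rwa [Finset.card_image_of_injective _ hfinj, Finset.card_univ, Fintype.card_fin] at this

lemma IsCycOriented.isCycleEmbedding_of_forall_not_cycBtw (hp : IsCycOriented p ε)
    (hinj : Function.Injective p) {m : ℕ} [NeZero m] {f : Fin m → Fin n}
    (hf : Function.Injective f)
    (hgap : ∀ k, 2 ≤ cycDist (f k) (f (k + 1)) ∧ 2 ≤ cycDist (f (k + 1)) (f k))
    (harc : ∀ k j, ¬ CycBtw (f k) (f j) (f (k + 1))) :
    IsCycleEmbedding p (convexHull ℝ (Set.range p)) f := by
  have hn : 2 ≤ n := (hgap 0).1.trans (cycDist_lt _ _).le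
  have hne : ∀ k, f k ≠ f (k + 1) := fun k h => by
    have := (hgap k).1
    rw [h, cycDist_self] at this
    omega
  have hadj : ∀ k, ¬ adjV (f k) (f (k + 1)) := by
    rintro k (h | h)
    · have := (hgap k).1
      rw [h, cycDist_add_one _ hn] at this
      omega
    · have := (hgap k).2
      rw [h, cycDist_add_one _ hn] at this
      omega
  refine ⟨hf, hadj, fun k => ?_, fun k l hset => ?_, fun k i => ?_⟩
  · exact (convex_convexHull ℝ _).segment_subset (subset_convexHull ℝ _ ⟨_, rfl⟩)
      (subset_convexHull ℝ _ ⟨_, rfl⟩)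
  · refine hp.seg_inter_subset (hne k) (hne l) hset ?_
    rintro (⟨h, -⟩ | ⟨h, -⟩)
    exacts [harc k l h, harc k (l + 1) h]
  · have hset : ({p (f k), p (f (k + 1))} : Set Pt) ≠ {p i, p (i + 1)} := fun h => by
      apply hadj k
      rcases Set.pair_eq_pair_iff.mp h with ⟨h₁, h₂⟩ | ⟨h₁, h₂⟩
      · exact .inl (by rw [hinj h₁, hinj h₂])
      · exact .inr (by rw [hinj h₁, hinj h₂])
    refine hp.seg_inter_subset (hne k) (self_ne_add_one hn i) hset fun h => ?_
    rcases h.symm with ⟨h, -⟩ | ⟨h, -⟩ <;> exact not_cycBtw_add_one _ _ h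

lemma IsCycOriented.exists_isCycleEmbedding (hp : IsCycOriented p ε) (hinj : Function.Injective p)
    {m : ℕ} [NeZero m] (hm : 2 ≤ m) (hmn : 2 * m ≤ n) :
    ∃ f : Fin m → Fin n, IsCycleEmbedding p (convexHull ℝ (Set.range p)) f := by
  let f : Fin m → Fin n := fun k => ⟨2 * k, by omega⟩
  have hsucc : ∀ k : Fin m, (k + 1).val = if k.val = m - 1 then 0 else k.val + 1 := fun k => by
    rw [Fin.val_add, Fin.val_one', Nat.mod_eq_of_lt (a := 1) (by omega)]
    split_ifs with hk
    · rw [hk, Nat.sub_add_cancel (by omega), Nat.mod_self]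
    · exact Nat.mod_eq_of_lt (by omega)
  have hdist : ∀ k j : Fin m, cycDist (f k) (f j) =
      if k.val ≤ j.val then 2 * j.val - 2 * k.val else 2 * j.val + n - 2 * k.val := fun k j => by
    rw [cycDist_eq]
    simp only [f]
    split_ifs <;> omega
  refine ⟨f, hp.isCycleEmbedding_of_forall_not_cycBtw hinj
    (fun a b h => Fin.ext (by simpa [f] using congrArg Fin.val h)) (fun k => ?_) fun k j h => ?_⟩
  · rw [hdist, hdist, hsucc]
    have := k.isLt
    split_ifs <;> omega
  · unfold CycBtw at h
    rw [hdist, hdist, hsucc] at h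
    have := k.isLt
    have := j.isLt
    split_ifs at h <;> omega

end Bounds

/-- A maximum-size cycle graph planarly polygon-embeddable in a convex polygon with `n ≥ 4`
vertices has exactly `⌊n / 2⌋` nodes: a cycle on `⌊n / 2⌋` nodes embeds, and no cycle on more
nodes does. (In a convex polygon every chord lies inside the polygon, so the bounded region is
the convex hull of the vertices.) -/
theorem stmt_13 (n : ℕ) [NeZero n] [NeZero (n / 2)] (hn : 4 ≤ n)
    (p : Fin n → Pt) (hP : IsConvexPolygon p) :
    (∃ f : Fin (n / 2) → Fin n, IsCycleEmbedding p (convexHull ℝ (Set.range p)) f) ∧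
    (∀ (m : ℕ) [NeZero m] (f : Fin m → Fin n),
      IsCycleEmbedding p (convexHull ℝ (Set.range p)) f → m ≤ n / 2) := by
  obtain ⟨ε, hε⟩ := hP.exists_isCycOriented
  have hinj : Function.Injective p := hP.2.injective
  refine ⟨hε.exists_isCycleEmbedding hinj (by omega) (by omega), fun m _ f hf => ?_⟩
  by_cases hm : 3 ≤ m
  · have := hε.two_mul_le_of_isCycleEmbedding hinj hm hf
    omega
  · omega
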